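/- For every constant c with 0 < c < 6/π², for all sufficiently large n there exists a lattice point P in the n×n grid A_n such that the number of points of A_n visible from P is at least c·n². -/

import Mathlib

/-!
The origin already sees every point `(a, b) ∈ [1, n]²` with `gcd a b = 1`. By Möbius inversion
there are `∑_{d ≤ n} μ d ⌊n/d⌋²` of them, which differs from `n² ∑_{d ≤ n} μ d / d²` by at most
`2n H_n = O(n log n)`, while `∑ μ d / d² = 1 / ζ 2 = 6 / π²`.
-/

open Finset ArithmeticFunction Filter
open scoped Real
open scoped ArithmeticFunction.Moebius LSeries.notation

def coprimePairs (n : ℕ) : Finset (ℕ × ℕ) := {p ∈ Icc 1 n ×ˢ Icc 1 n | p.1.Coprime p.2}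

noncomputable def visibleFrom (n : ℕ) (P : ℤ × ℤ) : Finset (ℤ × ℤ) :=
  {q ∈ Icc (0 : ℤ) n ×ˢ Icc (0 : ℤ) n | q ≠ P ∧ Int.gcd (q.1 - P.1) (q.2 - P.2) = 1}

theorem hasSum_moebius_div_sq : HasSum (fun d : ℕ => (μ d : ℝ) / d ^ 2) (6 / π ^ 2) := by
  have hs : 1 < (2 : ℂ).re := by norm_num
  have hL : L ↗μ 2 = 6 / π ^ 2 := by
    have h := LSeries_zeta_mul_Lseries_moebius hs
    rw [LSeries_zeta_eq_riemannZeta hs, riemannZeta_two] at h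
    have : (π : ℂ) ≠ 0 := by exact_mod_cast Real.pi_ne_zero
    field_simp at h ⊢
    linear_combination h
  have h := (LSeriesSummable_moebius_iff.mpr hs).LSeriesHasSum
  rw [LSeriesHasSum, hL] at h
  rw [← Complex.hasSum_ofReal]
  push_cast
  convert h using 2 with d
  rcases eq_or_ne d 0 with rfl | hd
  · simp
  · simp [LSeries.term_of_ne_zero hd]

theorem sum_divisors_moebius (n : ℕ) : ∑ d ∈ n.divisors, μ d = if n = 1 then 1 else 0 := by
  simpa only [coe_zeta_mul_apply, one_apply, intCoe_apply, Int.cast_id] using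
    congr($(coe_zeta_mul_coe_moebius (R := ℤ)) n)

theorem ite_coprime_eq_sum_moebius {n a b : ℕ} (ha : a ∈ Icc 1 n) :
    (if a.Coprime b then 1 else 0 : ℤ) = ∑ d ∈ Icc 1 n with d ∣ a ∧ d ∣ b, μ d := by
  rw [mem_Icc] at ha
  have hdiv : {d ∈ Icc 1 n | d ∣ a ∧ d ∣ b} = (a.gcd b).divisors := by
    ext d
    simp only [mem_filter, mem_Icc, Nat.mem_divisors, Nat.dvd_gcd_iff,
      Nat.gcd_ne_zero_left (by omega : a ≠ 0), ne_eq, not_false_eq_true, and_true]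
    refine ⟨And.right, fun hd => ⟨⟨Nat.pos_of_dvd_of_pos hd.1 (by omega), ?_⟩, hd⟩⟩
    exact (Nat.le_of_dvd (by omega) hd.1).trans ha.2
  rw [hdiv, sum_divisors_moebius]

theorem card_filter_dvd_dvd_Icc_product (n d : ℕ) :
    #{p ∈ Icc 1 n ×ˢ Icc 1 n | d ∣ p.1 ∧ d ∣ p.2} = (n / d) ^ 2 := by
  rw [filter_product (p := (d ∣ ·)) (q := (d ∣ ·)), card_product,
    show Icc 1 n = Ioc 0 n from Icc_succ_left_eq_Ioc 0 n, Nat.Ioc_filter_dvd_card_eq_div, sq]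

theorem card_coprimePairs (n : ℕ) :
    (#(coprimePairs n) : ℤ) = ∑ d ∈ Icc 1 n, μ d * (n / d : ℕ) ^ 2 := by
  rw [coprimePairs, card_filter, Nat.cast_sum]
  calc ∑ p ∈ Icc 1 n ×ˢ Icc 1 n, ((if p.1.Coprime p.2 then 1 else 0 : ℕ) : ℤ)
      = ∑ p ∈ Icc 1 n ×ˢ Icc 1 n, ∑ d ∈ Icc 1 n with d ∣ p.1 ∧ d ∣ p.2, μ d :=
        sum_congr rfl fun p hp => by
          push_cast
          exact ite_coprime_eq_sum_moebius (mem_product.mp hp).1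
    _ = ∑ d ∈ Icc 1 n, μ d * #{p ∈ Icc 1 n ×ˢ Icc 1 n | d ∣ p.1 ∧ d ∣ p.2} := by
        simp_rw [sum_filter]
        rw [sum_comm]
        refine sum_congr rfl fun d _ => ?_
        rw [← sum_filter, sum_const, nsmul_eq_mul, mul_comm]
    _ = ∑ d ∈ Icc 1 n, μ d * (n / d : ℕ) ^ 2 := by
        simp_rw [card_filter_dvd_dvd_Icc_product]
        push_cast
        rfl

theorem mul_sq_sub_two_mul_le_mul_floor_sq {m x : ℝ} (hm : |m| ≤ 1) (hx : 0 ≤ x) :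
    m * x ^ 2 - 2 * x ≤ m * (⌊x⌋₊ : ℝ) ^ 2 := by
  have hle : (⌊x⌋₊ : ℝ) ≤ x := Nat.floor_le hx
  have hlt : x < ⌊x⌋₊ + 1 := Nat.lt_floor_add_one x
  have hgap : 0 ≤ x ^ 2 - (⌊x⌋₊ : ℝ) ^ 2 ∧ x ^ 2 - (⌊x⌋₊ : ℝ) ^ 2 ≤ 2 * x := by
    constructor <;> nlinarith [Nat.cast_nonneg (α := ℝ) ⌊x⌋₊]
  nlinarith [mul_le_mul_of_nonneg_right (abs_le.mp hm).2 hgap.1]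

theorem le_card_coprimePairs (n : ℕ) :
    (n : ℝ) ^ 2 * ∑ d ∈ Icc 1 n, (μ d : ℝ) / d ^ 2 - 2 * n * (1 + Real.log n)
      ≤ #(coprimePairs n) := by
  have hharm : ∑ d ∈ Icc 1 n, (d : ℝ)⁻¹ ≤ 1 + Real.log n := by
    simpa [harmonic_eq_sum_Icc] using harmonic_le_one_add_log n
  have hcard : (#(coprimePairs n) : ℝ) = ∑ d ∈ Icc 1 n, (μ d : ℝ) * ((n / d : ℕ) : ℝ) ^ 2 := by
    have h := congrArg (Int.cast : ℤ → ℝ) (card_coprimePairs n)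
    push_cast at h
    exact h
  rw [hcard]
  calc (n : ℝ) ^ 2 * ∑ d ∈ Icc 1 n, (μ d : ℝ) / d ^ 2 - 2 * n * (1 + Real.log n)
      ≤ (n : ℝ) ^ 2 * ∑ d ∈ Icc 1 n, (μ d : ℝ) / d ^ 2 - 2 * n * ∑ d ∈ Icc 1 n, (d : ℝ)⁻¹ := by
        gcongr
    _ = ∑ d ∈ Icc 1 n, ((μ d : ℝ) * ((n : ℝ) / d) ^ 2 - 2 * ((n : ℝ) / d)) := by
        rw [sum_sub_distrib, mul_sum, mul_sum]
        congr 1 <;> refine sum_congr rfl fun d _ => by ring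
    _ ≤ ∑ d ∈ Icc 1 n, (μ d : ℝ) * ((n / d : ℕ) : ℝ) ^ 2 := by
        refine sum_le_sum fun d _ => ?_
        rw [← Nat.floor_div_eq_div (K := ℝ)]
        exact mul_sq_sub_two_mul_le_mul_floor_sq (mod_cast abs_moebius_le_one) (by positivity)

theorem card_coprimePairs_le_card_visibleFrom (n : ℕ) :
    #(coprimePairs n) ≤ #(visibleFrom n 0) := by
  refine card_le_card_of_injOn (fun p => ((p.1 : ℤ), (p.2 : ℤ))) (fun p hp => ?_) ?_
  · simp only [coprimePairs, visibleFrom, coe_filter, Set.mem_ofPred_eq, mem_product,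
      mem_Icc] at hp ⊢
    obtain ⟨⟨⟨h1, h1n⟩, h2, h2n⟩, hcop⟩ := hp
    refine ⟨⟨⟨by positivity, by exact_mod_cast h1n⟩, by positivity, by exact_mod_cast h2n⟩, ?_, ?_⟩
    · intro h
      simp only [Prod.ext_iff, Prod.fst_zero, Prod.snd_zero, Nat.cast_eq_zero] at h
      omega
    · simpa using hcop
  · intro p _ q _ h
    simp only [Prod.mk.injEq, Nat.cast_inj] at h
    exact Prod.ext h.1 h.2

theorem tendsto_sum_Icc_moebius_div_sq :
    Tendsto (fun n : ℕ => ∑ d ∈ Icc 1 n, (μ d : ℝ) / d ^ 2) atTop (nhds (6 / π ^ 2)) := by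
  refine (hasSum_moebius_div_sq.tendsto_sum_nat.comp (tendsto_add_atTop_nat 1)).congr fun n => ?_
  rw [Function.comp_apply, range_eq_Ico, sum_eq_sum_Ico_succ_bot n.succ_pos]
  simp [Ico_add_one_right_eq_Icc]

theorem tendsto_one_add_log_div : Tendsto (fun n : ℕ => (1 + Real.log n) / n) atTop (nhds 0) := by
  have h := (tendsto_inv_atTop_zero.add Real.isLittleO_log_id_atTop.tendsto_div_nhds_zero).comp
    tendsto_natCast_atTop_atTop
  simpa [add_div, Function.comp_def] using h

theorem eventually_le_card_coprimePairs {c : ℝ} (hc : c < 6 / π ^ 2) :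
    ∀ᶠ n : ℕ in atTop, c * n ^ 2 ≤ #(coprimePairs n) := by
  have hlim : Tendsto (fun n : ℕ => ∑ d ∈ Icc 1 n, (μ d : ℝ) / d ^ 2 - 2 * ((1 + Real.log n) / n))
      atTop (nhds (6 / π ^ 2)) := by
    simpa using tendsto_sum_Icc_moebius_div_sq.sub (tendsto_one_add_log_div.const_mul 2)
  filter_upwards [hlim.eventually (eventually_gt_nhds hc), eventually_ge_atTop 1] with n hn hn1
  have hn0 : (0 : ℝ) < n := by exact_mod_cast hn1
  calc c * n ^ 2
      ≤ (∑ d ∈ Icc 1 n, (μ d : ℝ) / d ^ 2 - 2 * ((1 + Real.log n) / n)) * n ^ 2 := by gcongr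
    _ = (n : ℝ) ^ 2 * ∑ d ∈ Icc 1 n, (μ d : ℝ) / d ^ 2 - 2 * n * (1 + Real.log n) := by
        field_simp
    _ ≤ #(coprimePairs n) := le_card_coprimePairs n

theorem exists_point_seeing_many_general (c : ℝ) (hc : c < 6 / Real.pi ^ 2) :
    ∃ N : ℕ, ∀ n : ℕ, N ≤ n →
      ∃ P ∈ Finset.Icc (0 : ℤ) n ×ˢ Finset.Icc (0 : ℤ) n,
        c * (n : ℝ) ^ 2 ≤
          (((Finset.Icc (0 : ℤ) n ×ˢ Finset.Icc (0 : ℤ) n).filter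
            (fun q : ℤ × ℤ => q ≠ P ∧ Int.gcd (q.1 - P.1) (q.2 - P.2) = 1)).card : ℝ) := by
  obtain ⟨N, hN⟩ := eventually_atTop.mp (eventually_le_card_coprimePairs hc)
  refine ⟨N, fun n hn => ⟨0, by simp, ?_⟩⟩
  calc c * (n : ℝ) ^ 2 ≤ #(coprimePairs n) := hN n hn
    _ ≤ #(visibleFrom n 0) := mod_cast card_coprimePairs_le_card_visibleFrom n

theorem exists_point_seeing_many (c : ℝ) (hc0 : 0 < c) (hc : c < 6 / Real.pi ^ 2) :
    ∃ N : ℕ, ∀ n : ℕ, N ≤ n →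
      ∃ P ∈ Finset.Icc (0 : ℤ) n ×ˢ Finset.Icc (0 : ℤ) n,
        c * (n : ℝ) ^ 2 ≤
          (((Finset.Icc (0 : ℤ) n ×ˢ Finset.Icc (0 : ℤ) n).filter
            (fun q : ℤ × ℤ => q ≠ P ∧ Int.gcd (q.1 - P.1) (q.2 - P.2) = 1)).card : ℝ) :=
  exists_point_seeing_many_general c hc
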